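/- If G is a bipartite graph and M is a nonempty uniquely restricted matching in G, then the graph G(M) has a vertex of degree 1 in G(M). -/

import Mathlib

open SimpleGraph

/-- The subgraph of `G` consisting of those pairs in `s` that are actually edges of `G`. -/
def pairsSubgraph {V : Type*} (G : SimpleGraph V) (s : Set (V × V)) : G.Subgraph where
  verts := {v | ∃ a b, (G.Adj a b ∧ ((a, b) ∈ s ∨ (b, a) ∈ s)) ∧ (v = a ∨ v = b)}
  Adj a b := G.Adj a b ∧ ((a, b) ∈ s ∨ (b, a) ∈ s)
  adj_sub h := h.1
  edge_vert h := ⟨_, _, h, Or.inl rfl⟩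
  symm := ⟨fun _ _ h => ⟨h.1.symm, h.2.symm⟩⟩

/-- `M` is an induced matching in `G`: it is a matching, and `G(M)`, the subgraph of `G`
induced by the set `V(M)` of covered vertices (which is `M.verts` for a matching subgraph),
is `1`-regular, i.e. every vertex of `G(M)` has exactly one neighbour in `G(M)`. -/
def IsInducedMatching {V : Type*} (G : SimpleGraph V) (M : G.Subgraph) : Prop :=
  M.IsMatching ∧ ∀ v : M.verts, ∃! w : M.verts, (G.induce M.verts).Adj v w

/-- `M` is an acyclic matching in `G`: it is a matching and `G(M)` is a forest. -/
def IsAcyclicMatching {V : Type*} (G : SimpleGraph V) (M : G.Subgraph) : Prop :=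
  M.IsMatching ∧ (G.induce M.verts).IsAcyclic

/-- `M` is a uniquely restricted matching in `G`: it is a matching and it is the unique
perfect matching of `G(M)`, i.e. the unique matching of `G` covering exactly `M.verts`. -/
def IsURMatching {V : Type*} (G : SimpleGraph V) (M : G.Subgraph) : Prop :=
  M.IsMatching ∧ ∀ M' : G.Subgraph, M'.IsMatching → M'.verts = M.verts → M' = M

/-- The (ordinary) matching number `ν(G)`: the maximum cardinality of a matching in `G`. -/
noncomputable def nuMatch {V : Type*} (G : SimpleGraph V) : ℕ :=
  sSup {k : ℕ | ∃ M : G.Subgraph, M.IsMatching ∧ M.edgeSet.ncard = k}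

/-- The uniquely restricted matching number `ν_ur(G)`. -/
noncomputable def nuUR {V : Type*} (G : SimpleGraph V) : ℕ :=
  sSup {k : ℕ | ∃ M : G.Subgraph, IsURMatching G M ∧ M.edgeSet.ncard = k}

/-- The acyclic matching number `ν_ac(G)`. -/
noncomputable def nuAc {V : Type*} (G : SimpleGraph V) : ℕ :=
  sSup {k : ℕ | ∃ M : G.Subgraph, IsAcyclicMatching G M ∧ M.edgeSet.ncard = k}

/-- The induced (strong) matching number `ν_s(G)`. -/
noncomputable def nuS {V : Type*} (G : SimpleGraph V) : ℕ :=
  sSup {k : ℕ | ∃ M : G.Subgraph, IsInducedMatching G M ∧ M.edgeSet.ncard = k}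

/-- `cyc` is an `M`-alternating cycle in `G`: a cycle of `G` whose edges alternate between
edges of `M` and edges of `E(G) \ M`. -/
def IsAltCycle {V : Type*} (G : SimpleGraph V) (M : G.Subgraph) {v : V}
    (cyc : G.Walk v v) : Prop :=
  cyc.IsCycle ∧ cyc.toSubgraph.spanningCoe.IsAlternating M.spanningCoe


/-!
Suppose no vertex of `G(M)` has degree `1`. The matching `M` pairs the two colour classes `S`
and `T` of `V(M)`, and every vertex of `G(M)` has a neighbour in `G(M)` besides its partner.
Sending `a ∈ T` to such a second neighbour of its partner is a fixed-point-free self-map of the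
finite set `T`; on its periodic points it is a nontrivial permutation `π`. Matching every `b ∈ S`
with `π` of its partner is then a second perfect matching of `G(M)`.
-/

namespace Function

variable {α : Type*}

theorem periodicPts_nonempty [Finite α] [Nonempty α] (f : α → α) : (periodicPts f).Nonempty := by
  obtain ⟨x⟩ := ‹Nonempty α›
  obtain ⟨m, n, hmn, heq⟩ := Finite.exists_ne_map_eq_of_infinite (f^[·] x)
  wlog hlt : m < n generalizing m n
  · exact this n m hmn.symm heq.symm (hmn.symm.lt_of_le (not_lt.mp hlt))
  refine ⟨f^[m] x, mk_mem_periodicPts (Nat.sub_pos_of_lt hlt) ?_⟩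
  rw [IsPeriodicPt, IsFixedPt, ← iterate_add_apply, Nat.sub_add_cancel hlt.le]
  exact heq.symm

-- `f` permutes its periodic points, and has one that it moves.
theorem exists_perm_ne_one_of_forall_ne [Finite α] [Nonempty α] (f : α → α)
    (hf : ∀ x, f x ≠ x) : ∃ π : Equiv.Perm α, π ≠ 1 ∧ ∀ x, π x = x ∨ π x = f x := by
  classical
  let π : Equiv.Perm α := Equiv.Perm.ofSubtype ((bijOn_periodicPts f).equiv f)
  have hπ : ∀ x ∈ periodicPts f, π x = f x := fun x hx =>
    Equiv.Perm.ofSubtype_apply_of_mem _ hx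
  obtain ⟨x, hx⟩ := periodicPts_nonempty f
  refine ⟨π, fun h => hf x (by rw [← hπ x hx, h, Equiv.Perm.one_apply]), fun y => ?_⟩
  by_cases hy : y ∈ periodicPts f
  · exact Or.inr (hπ y hy)
  · exact Or.inl (Equiv.Perm.ofSubtype_apply_of_not_mem _ hy)

end Function

namespace SimpleGraph

variable {V : Type*} {G : SimpleGraph V} {s t : Set V}

theorem Subgraph.exists_isMatching_adj_of_equiv (hst : Disjoint s t) (e : s ≃ t)
    (hadj : ∀ v : s, G.Adj v (e v)) :
    ∃ M : G.Subgraph, M.verts = s ∪ t ∧ M.IsMatching ∧ ∀ v : s, M.Adj v (e v) := by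
  refine ⟨{ verts := s ∪ t
            Adj := fun v w => (∃ h : v ∈ s, e ⟨v, h⟩ = w) ∨ (∃ h : w ∈ s, e ⟨w, h⟩ = v)
            adj_sub := ?_
            edge_vert := by grind }, rfl, ?_, fun v => Or.inl ⟨v.2, rfl⟩⟩
  · rintro v w (⟨hv, rfl⟩ | ⟨hw, rfl⟩)
    · exact hadj ⟨v, hv⟩
    · exact (hadj ⟨w, hw⟩).symm
  · rintro v (hv | hv)
    · refine ⟨e ⟨v, hv⟩, Or.inl ⟨hv, rfl⟩, ?_⟩
      rintro w (⟨_, rfl⟩ | ⟨hw, rfl⟩)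
      · rfl
      · exact (hst.ne_of_mem hv (e ⟨w, hw⟩).2 rfl).elim
    · refine ⟨e.symm ⟨v, hv⟩, Or.inr ⟨(e.symm _).2, by simp⟩, ?_⟩
      rintro w (⟨hw, rfl⟩ | ⟨hw, rfl⟩)
      · exact (hst.ne_of_mem hw hv rfl).elim
      · simp

variable {M : G.Subgraph}

theorem Subgraph.IsMatching.verts_subset_union (hM : M.IsMatching) (hG : G.IsBipartiteWith s t) :
    M.verts ⊆ s ∪ t := by
  intro v hv
  obtain ⟨w, hvw, -⟩ := hM hv
  rcases hG.mem_of_adj (M.adj_sub hvw) with h | h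
  exacts [Or.inl h.1, Or.inr h.1]

theorem Subgraph.IsMatching.exists_equiv_of_isBipartiteWith (hM : M.IsMatching)
    (hG : G.IsBipartiteWith s t) :
    ∃ e : ↥(M.verts ∩ s) ≃ ↥(M.verts ∩ t), ∀ v : ↥(M.verts ∩ s), M.Adj v (e v) := by
  choose p hp using fun v (hv : v ∈ M.verts) => (hM hv).exists
  have hps : ∀ v (hv : v ∈ M.verts ∩ s), p v hv.1 ∈ M.verts ∩ t := fun v hv =>
    ⟨M.edge_vert (hp v hv.1).symm, hG.mem_of_mem_adj hv.2 (M.adj_sub (hp v hv.1))⟩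
  have hpt : ∀ v (hv : v ∈ M.verts ∩ t), p v hv.1 ∈ M.verts ∩ s := fun v hv =>
    ⟨M.edge_vert (hp v hv.1).symm, hG.symm.mem_of_mem_adj hv.2 (M.adj_sub (hp v hv.1))⟩
  refine ⟨{ toFun := fun v => ⟨p v v.2.1, hps v v.2⟩
            invFun := fun w => ⟨p w w.2.1, hpt w w.2⟩
            left_inv := fun v => Subtype.ext (hM.eq_of_adj_left (hp _ _) (hp v v.2.1).symm)
            right_inv := fun w => Subtype.ext (hM.eq_of_adj_left (hp _ _) (hp w w.2.1).symm) },
    fun v => hp v v.2.1⟩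

theorem Subgraph.IsMatching.exists_adj_not_adj (hM : M.IsMatching) (v : M.verts)
    (hv : ¬∃! w : M.verts, (G.induce M.verts).Adj v w) :
    ∃ w ∈ M.verts, G.Adj v w ∧ ¬M.Adj v w := by
  obtain ⟨w, hvw, -⟩ := hM v.2
  have hw : w ∈ M.verts := M.edge_vert hvw.symm
  obtain ⟨u, hu, huw⟩ : ∃ u : M.verts, (G.induce M.verts).Adj v u ∧ u ≠ ⟨w, hw⟩ := by
    by_contra! h
    exact hv ⟨⟨w, hw⟩, M.adj_sub hvw, h⟩
  exact ⟨u, u.2, hu, fun h => huw (Subtype.ext (hM.eq_of_adj_left h hvw))⟩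

theorem _root_.IsURMatching.perm_eq_one (hM : IsURMatching G M) (hG : G.IsBipartiteWith s t)
    (e : ↥(M.verts ∩ s) ≃ ↥(M.verts ∩ t)) (he : ∀ v : ↥(M.verts ∩ s), M.Adj v (e v))
    (π : Equiv.Perm ↥(M.verts ∩ t)) (hπ : ∀ v : ↥(M.verts ∩ s), G.Adj v (π (e v))) : π = 1 := by
  have hdisj : Disjoint (M.verts ∩ s) (M.verts ∩ t) :=
    hG.disjoint.mono Set.inter_subset_right Set.inter_subset_right
  obtain ⟨M', hverts, hM', hadj⟩ :=
    Subgraph.exists_isMatching_adj_of_equiv hdisj (e.trans π) hπ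
  have hunion : M.verts ∩ s ∪ M.verts ∩ t = M.verts := by
    rw [← Set.inter_union_distrib_left, Set.inter_eq_left]
    exact hM.1.verts_subset_union hG
  obtain rfl : M' = M := hM.2 M' hM' (hverts.trans hunion)
  ext a
  have h := hadj (e.symm a)
  rw [Equiv.trans_apply, Equiv.apply_symm_apply] at h
  simpa using hM.1.eq_of_adj_left h (he (e.symm a))

end SimpleGraph

theorem bipartite_ur_matching_has_pendant_vertex {V : Type*} [Fintype V] (G : SimpleGraph V)
    (hbip : G.Colorable 2) (M : G.Subgraph) (hM : IsURMatching G M)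
    (hne : M.edgeSet.Nonempty) :
    ∃ v : M.verts, ∃! w : M.verts, (G.induce M.verts).Adj v w := by
  obtain ⟨s, t, hG⟩ := IsBipartite.exists_isBipartiteWith hbip
  obtain ⟨e, he⟩ := hM.1.exists_equiv_of_isBipartiteWith hG
  by_contra hpendant
  have hsecond : ∀ a : ↥(M.verts ∩ t), ∃ a' : ↥(M.verts ∩ t), G.Adj (e.symm a) a' ∧ a' ≠ a := by
    intro a
    obtain ⟨w, hw, hadj, hnadj⟩ :=
      hM.1.exists_adj_not_adj ⟨_, (e.symm a).2.1⟩ fun h => hpendant ⟨_, h⟩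
    refine ⟨⟨w, hw, hG.mem_of_mem_adj (e.symm a).2.2 hadj⟩, hadj, fun h => hnadj ?_⟩
    simpa [← h] using he (e.symm a)
  choose f hfadj hfne using hsecond
  have : Nonempty ↥(M.verts ∩ t) := by
    obtain ⟨⟨x, y⟩, hxy⟩ := hne
    rcases hG.mem_of_adj (M.adj_sub hxy) with h | h
    exacts [⟨⟨y, M.edge_vert hxy.symm, h.2⟩⟩, ⟨⟨x, M.edge_vert hxy, h.1⟩⟩]
  obtain ⟨π, hπ1, hπf⟩ := Function.exists_perm_ne_one_of_forall_ne f hfne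
  refine hπ1 (hM.perm_eq_one hG e he π fun b => ?_)
  rcases hπf (e b) with h | h <;> rw [h]
  · exact M.adj_sub (he b)
  · simpa using hfadj (e b)
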